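/- arXiv:1206.2442 — 2 statements merged into one kernel-verified Lean document; each statement's English description precedes it below -/
import Mathlib

section
/- Let h > 0, λ > 0, x_i ∈ ℝ, x_{i+1} = x_i + h, and let y_i, y_{i+1}, M_i, M_{i+1} ∈ ℝ. Define S : ℝ → ℝ by S(x) = (h²/(λ² sinh λ))·[M_{i+1}·sinh(λ(x−x_i)/h) + M_i·sinh(λ(x_{i+1}−x)/h)] − (h²/λ²)·[((x−x_i)/h)·(M_{i+1} − (λ²/h²)·y_{i+1}) + ((x_{i+1}−x)/h)·(M_i − (λ²/h²)·y_i)]. Then the derivative of S at the right endpoint satisfies S'(x_{i+1}) = (y_{i+1} − y_i)/h + (h/λ²)·[(λ·coth λ − 1)·M_{i+1} + (1 − λ/sinh λ)·M_i]. -/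
open Real

/-- `y0, y1` are the values of the piece at `xi, xi1`, and `M0, M1` those of its second
derivative. -/
noncomputable def tensionSplinePiece (h lam xi xi1 y0 y1 M0 M1 x : ℝ) : ℝ :=
  (h ^ 2 / (lam ^ 2 * sinh lam)) *
      (M1 * sinh (lam * (x - xi) / h) + M0 * sinh (lam * (xi1 - x) / h)) -
    (h ^ 2 / lam ^ 2) *
      (((x - xi) / h) * (M1 - (lam ^ 2 / h ^ 2) * y1) +
        ((xi1 - x) / h) * (M0 - (lam ^ 2 / h ^ 2) * y0))

theorem hasDerivAt_tensionSplinePiece {h lam : ℝ} (hh : h ≠ 0) (hlam : lam ≠ 0)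
    (xi xi1 y0 y1 M0 M1 x : ℝ) :
    HasDerivAt (tensionSplinePiece h lam xi xi1 y0 y1 M0 M1)
      ((y1 - y0) / h - h / lam ^ 2 * (M1 - M0) +
        h / (lam * sinh lam) *
          (M1 * cosh (lam * (x - xi) / h) - M0 * cosh (lam * (xi1 - x) / h))) x := by
  have hleft : HasDerivAt (fun x => (x - xi) / h) (1 / h) x :=
    ((hasDerivAt_id x).sub_const xi).div_const h
  have hright : HasDerivAt (fun x => (xi1 - x) / h) (-1 / h) x :=
    ((hasDerivAt_id x).const_sub xi1).div_const h
  have hsinh_left : HasDerivAt (fun x => sinh (lam * (x - xi) / h))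
      (cosh (lam * (x - xi) / h) * (lam * (1 / h))) x := by
    simpa only [mul_div_assoc] using (hleft.const_mul lam).sinh
  have hsinh_right : HasDerivAt (fun x => sinh (lam * (xi1 - x) / h))
      (cosh (lam * (xi1 - x) / h) * (lam * (-1 / h))) x := by
    simpa only [mul_div_assoc] using (hright.const_mul lam).sinh
  have hsinh : sinh lam ≠ 0 := sinh_ne_zero.mpr hlam
  have hpiece := (((hsinh_left.const_mul M1).add (hsinh_right.const_mul M0)).const_mul
      (h ^ 2 / (lam ^ 2 * sinh lam))).sub
    (((hleft.mul_const (M1 - (lam ^ 2 / h ^ 2) * y1)).add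
      (hright.mul_const (M0 - (lam ^ 2 / h ^ 2) * y0))).const_mul (h ^ 2 / lam ^ 2))
  refine hpiece.congr_deriv ?_
  field_simp
  ring

theorem tension_spline_deriv_right_endpoint
    (h lam xi xi1 : ℝ) (hh : 0 < h) (hlam : 0 < lam) (hx : xi1 = xi + h)
    (y0 y1 M0 M1 : ℝ)
    (S : ℝ → ℝ)
    (hS : ∀ x, S x =
      (h ^ 2 / (lam ^ 2 * Real.sinh lam)) *
        (M1 * Real.sinh (lam * (x - xi) / h) + M0 * Real.sinh (lam * (xi1 - x) / h)) -
      (h ^ 2 / lam ^ 2) *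
        (((x - xi) / h) * (M1 - (lam ^ 2 / h ^ 2) * y1) +
         ((xi1 - x) / h) * (M0 - (lam ^ 2 / h ^ 2) * y0))) :
    deriv S xi1 = (y1 - y0) / h +
      (h / lam ^ 2) * ((lam * (Real.cosh lam / Real.sinh lam) - 1) * M1 +
        (1 - lam / Real.sinh lam) * M0) := by
  have hS_eq : S = tensionSplinePiece h lam xi xi1 y0 y1 M0 M1 := funext hS
  have hnode_right : lam * (xi1 - xi) / h = lam := by
    rw [hx, add_sub_cancel_left, mul_div_cancel_right₀ _ hh.ne']
  rw [hS_eq, (hasDerivAt_tensionSplinePiece hh.ne' hlam.ne' xi xi1 y0 y1 M0 M1 xi1).deriv,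
    hnode_right, sub_self, mul_zero, zero_div, cosh_zero]
  have hsinh : sinh lam ≠ 0 := sinh_ne_zero.mpr hlam.ne'
  field_simp
  ring
end

section
/- Let y : ℝ → ℝ be six times continuously differentiable and let x ∈ ℝ. With λ₁ = 1/12 and λ₂ = 5/12, as h → 0 one has [y(x+h) − 2y(x) + y(x−h)] − h²·[(1/12)·y''(x−h) + (5/6)·y''(x) + (1/12)·y''(x+h)] = O(h⁶), i.e. this choice of parameters yields a fourth-order method. -/
/-!
Taylor-expand `y` to order 6 and `y''` to order 4 about `x`, at `x + h` and `x - h`. The odd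
powers of `h` cancel between the two sides, the terms `h⁰`, `h²`, `h⁴` cancel by the choice
`λ₁ = 1/12`, `λ₂ = 5/12`, and what is left is `-y⁽⁶⁾(x) h⁶ / 240` plus `o(h⁶)` remainders.
-/

open Real Filter Topology Asymptotics

open Finset Nat in
theorem isLittleO_sub_taylor_comp_add_mul {E : Type*} [NormedAddCommGroup E] [NormedSpace ℝ E]
    {f : ℝ → E} {n : ℕ} (hf : ContDiff ℝ n f) (x c : ℝ) :
    (fun h => f (x + c * h) -
        ∑ k ∈ range (n + 1), ((c * h) ^ k / (k ! : ℝ)) • iteratedDeriv k f x)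
      =o[𝓝 0] fun h => h ^ n := by
  have hlim : Tendsto (fun h : ℝ => x + c * h) (𝓝 0) (𝓝 x) := by
    simpa using (tendsto_const_nhds (x := x)).add ((tendsto_id (x := 𝓝 (0 : ℝ))).const_mul c)
  have hpow : (fun h : ℝ => (x + c * h - x) ^ n) =O[𝓝 0] fun h => h ^ n := by
    simpa only [add_sub_cancel_left, mul_pow] using
      (isBigO_refl (fun h : ℝ => h ^ n) _).const_mul_left (c ^ n)
  refine (((taylor_isLittleO_univ hf).comp_tendsto hlim).trans_isBigO hpow).congr_left fun h => ?_
  simp [taylor_within_apply, iteratedDerivWithin_univ, div_eq_inv_mul, mul_comm]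

theorem iteratedDeriv_iteratedDeriv {𝕜 F : Type*} [NontriviallyNormedField 𝕜]
    [NormedAddCommGroup F] [NormedSpace 𝕜 F] (m n : ℕ) (f : 𝕜 → F) :
    iteratedDeriv m (iteratedDeriv n f) = iteratedDeriv (m + n) f := by
  simp only [iteratedDeriv_eq_iterate, Function.iterate_add_apply]

open Finset Nat in
theorem fourth_order_accuracy
    (y : ℝ → ℝ) (hy : ContDiff ℝ 6 y) (x : ℝ) :
    (fun h : ℝ =>
        (y (x + h) - 2 * y x + y (x - h)) -
          h ^ 2 * ((1 / 12) * iteratedDeriv 2 y (x - h) + (5 / 6) * iteratedDeriv 2 y x +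
            (1 / 12) * iteratedDeriv 2 y (x + h)))
      =O[nhds 0] (fun h : ℝ => h ^ 6) := by
  have hy'' : ContDiff ℝ (4 : ℕ) (iteratedDeriv 2 y) := by
    rw [iteratedDeriv_eq_iterate]
    exact hy.iterate_deriv' 4 2
  set R₆ := fun (c h : ℝ) =>
    y (x + c * h) - ∑ k ∈ range 7, ((c * h) ^ k / (k ! : ℝ)) • iteratedDeriv k y x
  set R₄ := fun (c h : ℝ) => iteratedDeriv 2 y (x + c * h) -
    ∑ k ∈ range 5, ((c * h) ^ k / (k ! : ℝ)) • iteratedDeriv k (iteratedDeriv 2 y) x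
  have hR₆ (c : ℝ) : R₆ c =O[𝓝 0] fun h => h ^ 6 :=
    (isLittleO_sub_taylor_comp_add_mul (n := 6) hy x c).isBigO
  have hR₄ (c : ℝ) : (fun h => h ^ 2 * R₄ c h) =O[𝓝 0] fun h => h ^ 6 :=
    ((isBigO_refl (fun h : ℝ => h ^ 2) _).mul
      (isLittleO_sub_taylor_comp_add_mul hy'' x c).isBigO).congr_right fun h => by ring
  have hsplit (h : ℝ) : (y (x + h) - 2 * y x + y (x - h)) -
      h ^ 2 * ((1 / 12) * iteratedDeriv 2 y (x - h) + (5 / 6) * iteratedDeriv 2 y x +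
        (1 / 12) * iteratedDeriv 2 y (x + h)) =
      R₆ 1 h + R₆ (-1) h - 1 / 12 * (h ^ 2 * R₄ 1 h + h ^ 2 * R₄ (-1) h)
        - iteratedDeriv 6 y x / 240 * h ^ 6 := by
    simp only [R₆, R₄, sum_range_succ, sum_range_zero, iteratedDeriv_iteratedDeriv,
      iteratedDeriv_zero, smul_eq_mul, one_mul, neg_one_mul, ← sub_eq_add_neg, factorial]
    push_cast
    ring
  exact (((hR₆ 1).add (hR₆ (-1))).sub (((hR₄ 1).add (hR₄ (-1))).const_mul_left (1 / 12))
    |>.sub (isBigO_const_mul_self _ _ _)).congr_left fun h => (hsplit h).symm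
end
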